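/- For b > 0 with b ≠ 1, every solution of the ODE (1-x²)²Ω''(x) - 2(1-b)x(1-x²)Ω'(x) - (1-b²)Ω(x) = 0 on (0,1) with Ω(0) = 0 and Ω'(0) = C is given by Ω(x) = C·x·(1-x²)^{(b-1)/2}·₂F₁((1-b)/2, b/2; 3/2; x²). -/

import Mathlib

/-
Substituting `Ω = (1 - x²) ^ ((b - 1) / 2) * u` turns the equation into
`(1 - x²) u'' = (b - b²) u`. The odd power series `u = ∑ sₘ x ^ (2m + 1)`, where `sₘ` are the
coefficients of `₂F₁((1 - b) / 2, b / 2; 3 / 2; ·)`, solves it: the hypergeometric recurrence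
for `sₘ` is exactly the recurrence this equation forces on odd power series, and since `|sₘ|`
grows at most polynomially the series can be differentiated termwise on `(-1, 1)`.
As `u(0) = 0` and `u'(0) = 1`, both `Ω (1 - x²) ^ ((1 - b) / 2)` and `C u` solve the same linear
second-order equation, whose coefficient is continuous on `[0, x]`, with the same initial data,
so they coincide by uniqueness for Lipschitz ODEs.
-/

open Real Set

/-- The Gaussian hypergeometric function ₂F₁(a,b;c;x) as a power series. -/
noncomputable def twoF1 (a b c x : ℝ) : ℝ :=
  ∑' n : ℕ, ((ascPochhammer ℝ n).eval a * (ascPochhammer ℝ n).eval b)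
    / ((ascPochhammer ℝ n).eval c * (n.factorial : ℝ)) * x ^ n

lemma ODE_linear_second_order_unique_of_mem_Icc_right {q u u' v v' : ℝ → ℝ} {s t : ℝ}
    (hq : ContinuousOn q (Icc s t))
    (hu : ∀ τ ∈ Icc s t, HasDerivAt u (u' τ) τ)
    (hu' : ∀ τ ∈ Icc s t, HasDerivAt u' (q τ * u τ) τ)
    (hv : ∀ τ ∈ Icc s t, HasDerivAt v (v' τ) τ)
    (hv' : ∀ τ ∈ Icc s t, HasDerivAt v' (q τ * v τ) τ)
    (h₀ : u s = v s) (h₀' : u' s = v' s) :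
    EqOn u v (Icc s t) := by
  obtain ⟨M, hM⟩ := isCompact_Icc.exists_bound_of_continuousOn hq
  have hlip : ∀ τ ∈ Icc s t,
      LipschitzWith (max 1 M.toNNReal) fun p : ℝ × ℝ => (p.2, q τ * p.1) :=
    fun τ hτ => (LipschitzWith.prod_snd.prodMk ((lipschitzWith_smul (q τ)).comp
      LipschitzWith.prod_fst)).weaken (max_le_max le_rfl (by
        rw [mul_one, ← NNReal.coe_le_coe, coe_nnnorm, Real.coe_toNNReal']
        exact (hM τ hτ).trans (le_max_left _ _)))
  have hpair : ∀ {w w' : ℝ → ℝ}, (∀ τ ∈ Icc s t, HasDerivAt w (w' τ) τ) →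
      (∀ τ ∈ Icc s t, HasDerivAt w' (q τ * w τ) τ) →
      ∀ τ ∈ Icc s t, HasDerivAt (fun τ => (w τ, w' τ)) ((w' τ, q τ * w τ)) τ :=
    fun hw hw' τ hτ => (hw τ hτ).prodMk (hw' τ hτ)
  have huniq := ODE_solution_unique_of_mem_Icc_right (v := fun τ p => (p.2, q τ * p.1))
    (s := fun _ => univ) (fun τ hτ => (hlip τ (Ico_subset_Icc_self hτ)).lipschitzOnWith)
    (fun τ hτ => (hpair hu hu' τ hτ).continuousAt.continuousWithinAt)
    (fun τ hτ => (hpair hu hu' τ (Ico_subset_Icc_self hτ)).hasDerivWithinAt)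
    (fun _ _ => mem_univ _)
    (fun τ hτ => (hpair hv hv' τ hτ).continuousAt.continuousWithinAt)
    (fun τ hτ => (hpair hv hv' τ (Ico_subset_Icc_self hτ)).hasDerivWithinAt)
    (fun _ _ => mem_univ _) (Prod.ext h₀ h₀')
  exact fun τ hτ => congrArg Prod.fst (huniq hτ)

lemma summable_succ_pow_mul_geometric (k : ℕ) {r : ℝ} (hr : |r| < 1) :
    Summable fun n : ℕ => ((n : ℝ) + 1) ^ k * r ^ n := by
  have hr' : ‖r‖ < 1 := by rwa [Real.norm_eq_abs]
  simp_rw [add_pow, one_pow, mul_one, Finset.sum_mul]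
  exact summable_sum fun j _ => by
    simpa [mul_comm, mul_assoc, mul_left_comm] using
      (summable_pow_mul_geometric_of_norm_lt_one j hr').mul_left (k.choose j : ℝ)

def derivCoeff (a : ℕ → ℝ) (n : ℕ) : ℝ := ((n : ℝ) + 1) * a (n + 1)

section PolynomialGrowth

variable {a : ℕ → ℝ} {M : ℝ} {k : ℕ}

lemma summable_mul_pow_of_abs_le (ha : ∀ n, |a n| ≤ M * ((n : ℝ) + 1) ^ k) {x : ℝ}
    (hx : |x| < 1) : Summable fun n => a n * x ^ n := by
  refine .of_norm_bounded ((summable_succ_pow_mul_geometric k (abs_abs x ▸ hx)).mul_left M)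
    fun n => ?_
  rw [Real.norm_eq_abs, abs_mul, abs_pow, ← mul_assoc]
  exact mul_le_mul_of_nonneg_right (ha n) (by positivity)

lemma abs_derivCoeff_le (ha : ∀ n, |a n| ≤ M * ((n : ℝ) + 1) ^ k) (n : ℕ) :
    |derivCoeff a n| ≤ 2 ^ k * M * ((n : ℝ) + 1) ^ (k + 1) := by
  have hM : 0 ≤ M := le_trans (abs_nonneg _) ((ha 0).trans (by simp))
  have h2 : ((n + 1 : ℕ) : ℝ) + 1 ≤ 2 * ((n : ℝ) + 1) := by push_cast; linarith
  calc |derivCoeff a n| = ((n : ℝ) + 1) * |a (n + 1)| := by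
        rw [derivCoeff, abs_mul, abs_of_pos (by positivity)]
    _ ≤ ((n : ℝ) + 1) * (M * (2 * ((n : ℝ) + 1)) ^ k) := by
        gcongr
        exact (ha _).trans (by gcongr)
    _ = 2 ^ k * M * ((n : ℝ) + 1) ^ (k + 1) := by rw [mul_pow]; ring

lemma hasDerivAt_tsum_mul_pow (ha : ∀ n, |a n| ≤ M * ((n : ℝ) + 1) ^ k) {x : ℝ}
    (hx : |x| < 1) :
    HasDerivAt (fun y => ∑' n, a n * y ^ n) (∑' n, derivCoeff a n * x ^ n) x := by
  obtain ⟨r, hxr, hr1⟩ := exists_between hx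
  have hr : |r| < 1 := by rwa [abs_of_pos ((abs_nonneg x).trans_lt hxr)]
  have htail : HasDerivAt (fun y => ∑' n, a (n + 1) * y ^ (n + 1))
      (∑' n, derivCoeff a n * x ^ n) x := by
    refine hasDerivAt_tsum_of_isPreconnected (g := fun n y => a (n + 1) * y ^ (n + 1))
      (g' := fun n y => derivCoeff a n * y ^ n)
      ((summable_succ_pow_mul_geometric (k + 1) hr).mul_left (2 ^ k * M)) isOpen_Ioo
      isPreconnected_Ioo (fun n y _ => ?_) (fun n y hy => ?_) (y₀ := 0)
      ⟨by linarith [abs_nonneg x], by linarith [abs_nonneg x]⟩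
      (by simp only [zero_pow (Nat.succ_ne_zero _), mul_zero]; exact summable_zero)
      (abs_lt.mp hxr)
    · refine ((hasDerivAt_pow (n + 1) y).const_mul (a (n + 1))).congr_deriv ?_
      rw [derivCoeff, Nat.add_sub_cancel]
      push_cast
      ring
    · have hy : |y| ≤ r := (abs_lt.mpr hy).le
      rw [Real.norm_eq_abs, abs_mul, abs_pow, ← mul_assoc]
      exact mul_le_mul (abs_derivCoeff_le ha n) (pow_le_pow_left₀ (abs_nonneg y) hy n)
        (by positivity) ((abs_nonneg _).trans (abs_derivCoeff_le ha n))
  refine (htail.const_add (a 0)).congr_of_eventuallyEq ?_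
  filter_upwards [Ioo_mem_nhds (abs_lt.mp hx).1 (abs_lt.mp hx).2] with y hy
  rw [(summable_mul_pow_of_abs_le ha (abs_lt.mpr hy)).tsum_eq_zero_add]
  simp

lemma one_sub_sq_mul_tsum_derivCoeff_derivCoeff (ha : ∀ n, |a n| ≤ M * ((n : ℝ) + 1) ^ k)
    {μ : ℝ} (hrec : ∀ n : ℕ, ((n : ℝ) + 1) * ((n : ℝ) + 2) * a (n + 2)
      = ((n : ℝ) * ((n : ℝ) - 1) + μ) * a n) {x : ℝ} (hx : |x| < 1) :
    (1 - x ^ 2) * ∑' n, derivCoeff (derivCoeff a) n * x ^ n = μ * ∑' n, a n * x ^ n := by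
  set f : ℕ → ℝ := fun n => (n : ℝ) * ((n : ℝ) - 1) * a n * x ^ n
  have hf : Function.support f ⊆ range (· + 2) := by
    intro n hn
    obtain _ | _ | m := n
    · simp [f] at hn
    · simp [f] at hn
    · exact ⟨m, rfl⟩
  have hshift :
      (fun n => x ^ 2 * (derivCoeff (derivCoeff a) n * x ^ n)) = fun n => f (n + 2) := by
    ext n
    simp only [f, derivCoeff]
    push_cast
    ring
  have hS2 := summable_mul_pow_of_abs_le (abs_derivCoeff_le (abs_derivCoeff_le ha)) hx
  have hSf : Summable f := by
    have : Summable fun n => f (n + 2) := hshift ▸ hS2.mul_left (x ^ 2)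
    exact ((add_left_injective 2).summable_iff fun n hn => Function.notMem_support.mp
      (fun h => hn (hf h))).mp this
  have hx2 : x ^ 2 * ∑' n, derivCoeff (derivCoeff a) n * x ^ n = ∑' n, f n := by
    rw [← tsum_mul_left, hshift]
    exact (add_left_injective 2).tsum_eq hf
  rw [sub_mul, one_mul, hx2, ← tsum_mul_left, ← hS2.tsum_sub hSf]
  refine tsum_congr fun n => ?_
  simp only [f, derivCoeff]
  push_cast
  linear_combination x ^ n * hrec n

end PolynomialGrowth

lemma add_mul_pow_le_mul_add_one_pow {t : ℝ} (ht : 0 < t) (K : ℕ) :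
    (t + K) * t ^ K ≤ t * (t + 1) ^ K := by
  have h := one_add_mul_le_pow (a := t⁻¹) (by linarith [inv_pos.mpr ht]) K
  calc (t + K) * t ^ K = (1 + K * t⁻¹) * (t * t ^ K) := by field_simp
    _ ≤ (1 + t⁻¹) ^ K * (t * t ^ K) := by gcongr
    _ = t * (t + 1) ^ K := by rw [mul_left_comm, ← mul_pow]; field_simp

lemma twoF1_eq_tsum (a b c x : ℝ) :
    twoF1 a b c x = ∑' n, ordinaryHypergeometricCoefficient a b c n * x ^ n := by
  simp only [twoF1, ordinaryHypergeometricCoefficient, div_eq_mul_inv, mul_inv]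
  exact tsum_congr fun n => by ring

lemma ordinaryHypergeometricCoefficient_succ (a b : ℝ) {c : ℝ} (hc : ∀ k : ℕ, (k : ℝ) ≠ -c)
    (n : ℕ) : ((n : ℝ) + 1) * (c + n) * ordinaryHypergeometricCoefficient a b c (n + 1)
      = (a + n) * (b + n) * ordinaryHypergeometricCoefficient a b c n := by
  have hpoch : (ascPochhammer ℝ n).eval c ≠ 0 :=
    (ascPochhammer_eval_eq_zero_iff n c).not.mpr (by push Not; exact fun k _ => hc k)
  have hcn : c + n ≠ 0 := fun h => hc n (by linarith)
  simp only [ordinaryHypergeometricCoefficient, ascPochhammer_succ_eval, Nat.factorial_succ]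
  push_cast
  field_simp

lemma abs_ordinaryHypergeometricCoefficient_le {a b c : ℝ} {K : ℕ} (ha : |a| ≤ K)
    (hb : |b| ≤ K) (hc : 1 ≤ c) (n : ℕ) :
    |ordinaryHypergeometricCoefficient a b c n| ≤ ((n : ℝ) + 1) ^ (2 * K) := by
  induction n with
  | zero => simp
  | succ n ih =>
    set t : ℝ := n + 1
    have ht : 0 < t := by positivity
    have hrec : t * (c + n) * |ordinaryHypergeometricCoefficient a b c (n + 1)|
        = |a + n| * |b + n| * |ordinaryHypergeometricCoefficient a b c n| := by
      have hpos : 0 < t * (c + n) := by positivity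
      rw [← abs_of_pos hpos, ← abs_mul, ← abs_mul, ← abs_mul,
        ordinaryHypergeometricCoefficient_succ a b (fun k => ?_) n]
      have : (0 : ℝ) ≤ k := k.cast_nonneg
      linarith
    have hab : |a + n| * |b + n| ≤ (t + K) ^ 2 := by
      rw [sq]
      gcongr <;> exact (abs_add_le _ _).trans (by rw [Nat.abs_cast]; linarith)
    have hstep : ((t + K) * t ^ K) ^ 2 ≤ (t * (t + 1) ^ K) ^ 2 :=
      pow_le_pow_left₀ (by positivity) (add_mul_pow_le_mul_add_one_pow ht K) 2
    refine le_of_mul_le_mul_left ?_ (by positivity : 0 < t * (c + n))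
    push_cast
    calc t * (c + n) * |ordinaryHypergeometricCoefficient a b c (n + 1)|
        = |a + n| * |b + n| * |ordinaryHypergeometricCoefficient a b c n| := hrec
      _ ≤ (t + K) ^ 2 * t ^ (2 * K) := by gcongr
      _ ≤ t * t * (t + 1) ^ (2 * K) := by
          rw [pow_mul', pow_mul']; nlinarith [hstep]
      _ ≤ t * (c + n) * (t + 1) ^ (2 * K) := by gcongr; linarith

def oddCoeff (s : ℕ → ℝ) (n : ℕ) : ℝ := if Even n then 0 else s (n / 2)

section OddCoeff

variable (s : ℕ → ℝ)

@[simp]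
lemma oddCoeff_two_mul (m : ℕ) : oddCoeff s (2 * m) = 0 := by
  simp [oddCoeff]

@[simp]
lemma oddCoeff_zero : oddCoeff s 0 = 0 := rfl

@[simp]
lemma oddCoeff_one : oddCoeff s 1 = s 0 := rfl

@[simp]
lemma oddCoeff_two_mul_add_one (m : ℕ) : oddCoeff s (2 * m + 1) = s m := by
  simp only [oddCoeff, Nat.not_even_two_mul_add_one, if_false]
  congr 1
  omega

lemma abs_oddCoeff_le {M : ℝ} {k : ℕ} (hs : ∀ m, |s m| ≤ M * ((m : ℝ) + 1) ^ k) (n : ℕ) :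
    |oddCoeff s n| ≤ M * ((n : ℝ) + 1) ^ k := by
  have hM : 0 ≤ M := (abs_nonneg _).trans ((hs 0).trans (by simp))
  obtain ⟨m, rfl | rfl⟩ := Nat.even_or_odd' n
  · rw [oddCoeff_two_mul, abs_zero]
    positivity
  · rw [oddCoeff_two_mul_add_one]
    exact (hs m).trans (by gcongr; linarith)

lemma tsum_oddCoeff_mul_pow (x : ℝ) :
    ∑' n, oddCoeff s n * x ^ n = x * ∑' m, s m * (x ^ 2) ^ m := by
  have hinj : Function.Injective fun m : ℕ => 2 * m + 1 := fun _ _ h => by simpa using h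
  rw [← tsum_mul_left, ← hinj.tsum_eq]
  · exact tsum_congr fun m => by simp only [oddCoeff_two_mul_add_one]; ring
  · intro n hn
    obtain ⟨m, rfl | rfl⟩ := Nat.even_or_odd' n
    · simp at hn
    · exact ⟨m, rfl⟩

end OddCoeff

@[simp]
lemma tsum_mul_zero_pow (a : ℕ → ℝ) : ∑' n, a n * 0 ^ n = a 0 := by
  rw [tsum_eq_single 0 fun n hn => by simp [hn]]
  simp

noncomputable def oddHypergeometricCoeff (b : ℝ) : ℕ → ℝ :=
  oddCoeff (ordinaryHypergeometricCoefficient ((1 - b) / 2) (b / 2) (3 / 2))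

section OddHypergeometric

variable (b : ℝ)

lemma exists_abs_oddHypergeometricCoeff_le :
    ∃ (M : ℝ) (k : ℕ), ∀ n, |oddHypergeometricCoeff b n| ≤ M * ((n : ℝ) + 1) ^ k := by
  obtain ⟨K, hK⟩ := exists_nat_ge (|(1 - b) / 2| + |b / 2|)
  refine ⟨1, 2 * K, abs_oddCoeff_le _ fun m => ?_⟩
  rw [one_mul]
  exact abs_ordinaryHypergeometricCoefficient_le (by linarith [abs_nonneg (b / 2)])
    (by linarith [abs_nonneg ((1 - b) / 2)]) (by norm_num) m

lemma oddHypergeometricCoeff_rec (n : ℕ) :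
    ((n : ℝ) + 1) * ((n : ℝ) + 2) * oddHypergeometricCoeff b (n + 2)
      = ((n : ℝ) * ((n : ℝ) - 1) + (b - b ^ 2)) * oddHypergeometricCoeff b n := by
  obtain ⟨m, rfl | rfl⟩ := Nat.even_or_odd' n
  · simp [oddHypergeometricCoeff, show 2 * m + 2 = 2 * (m + 1) by ring]
  · have h := ordinaryHypergeometricCoefficient_succ ((1 - b) / 2) (b / 2) (c := 3 / 2)
      (fun k => by have : (0 : ℝ) ≤ k := k.cast_nonneg; linarith) m
    simp only [oddHypergeometricCoeff, show 2 * m + 1 + 2 = 2 * (m + 1) + 1 by ring,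
      oddCoeff_two_mul_add_one]
    push_cast
    linear_combination 4 * h

lemma tsum_oddHypergeometricCoeff_mul_pow (x : ℝ) :
    ∑' n, oddHypergeometricCoeff b n * x ^ n
      = x * twoF1 ((1 - b) / 2) (b / 2) (3 / 2) (x ^ 2) := by
  rw [oddHypergeometricCoeff, tsum_oddCoeff_mul_pow, twoF1_eq_tsum]

@[simp]
lemma oddHypergeometricCoeff_zero : oddHypergeometricCoeff b 0 = 0 := rfl

@[simp]
lemma derivCoeff_oddHypergeometricCoeff_zero : derivCoeff (oddHypergeometricCoeff b) 0 = 1 := by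
  simp [derivCoeff, oddHypergeometricCoeff, ordinaryHypergeometricCoefficient]

lemma hasDerivAt_tsum_oddHypergeometricCoeff {x : ℝ} (hx : |x| < 1) :
    HasDerivAt (fun y => ∑' n, oddHypergeometricCoeff b n * y ^ n)
      (∑' n, derivCoeff (oddHypergeometricCoeff b) n * x ^ n) x := by
  obtain ⟨M, k, ha⟩ := exists_abs_oddHypergeometricCoeff_le b
  exact hasDerivAt_tsum_mul_pow ha hx

lemma hasDerivAt_tsum_derivCoeff_oddHypergeometricCoeff {x : ℝ} (hx : |x| < 1) :
    HasDerivAt (fun y => ∑' n, derivCoeff (oddHypergeometricCoeff b) n * y ^ n)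
      ((b - b ^ 2) / (1 - x ^ 2) * ∑' n, oddHypergeometricCoeff b n * x ^ n) x := by
  obtain ⟨M, k, ha⟩ := exists_abs_oddHypergeometricCoeff_le b
  have hx2 : 1 - x ^ 2 ≠ 0 := by nlinarith [sq_abs x, abs_nonneg x]
  refine (hasDerivAt_tsum_mul_pow (abs_derivCoeff_le ha) hx).congr_deriv ?_
  rw [div_mul_eq_mul_div, eq_div_iff hx2, mul_comm]
  exact one_sub_sq_mul_tsum_derivCoeff_derivCoeff ha (oddHypergeometricCoeff_rec b) hx

end OddHypergeometric

lemma hasDerivAt_one_sub_sq_rpow (s : ℝ) {t : ℝ} (ht : t ^ 2 < 1) :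
    HasDerivAt (fun x => (1 - x ^ 2) ^ s) (-2 * s * t * (1 - t ^ 2) ^ (s - 1)) t := by
  have h := ((hasDerivAt_pow 2 t).const_sub 1).rpow_const (p := s) (Or.inl (by linarith))
  exact h.congr_deriv (by push_cast; ring)

section Substitution

variable {Ω : ℝ → ℝ} {b t : ℝ}

lemma hasDerivAt_mul_one_sub_sq_rpow (hΩ : DifferentiableAt ℝ Ω t) (ht : t ^ 2 < 1) :
    HasDerivAt (fun x => Ω x * (1 - x ^ 2) ^ ((1 - b) / 2))
      (deriv Ω t * (1 - t ^ 2) ^ ((1 - b) / 2)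
        - (1 - b) * t * Ω t * (1 - t ^ 2) ^ ((1 - b) / 2 - 1)) t :=
  (hΩ.hasDerivAt.mul (hasDerivAt_one_sub_sq_rpow _ ht)).congr_deriv (by ring)

lemma hasDerivAt_deriv_mul_one_sub_sq_rpow (hΩ : DifferentiableAt ℝ Ω t)
    (hΩ' : DifferentiableAt ℝ (deriv Ω) t) (ht : t ^ 2 < 1)
    (hode : (1 - t ^ 2) ^ 2 * deriv (deriv Ω) t - 2 * (1 - b) * t * (1 - t ^ 2) * deriv Ω t
      - (1 - b ^ 2) * Ω t = 0) :
    HasDerivAt (fun x => deriv Ω x * (1 - x ^ 2) ^ ((1 - b) / 2)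
        - (1 - b) * x * Ω x * (1 - x ^ 2) ^ ((1 - b) / 2 - 1))
      ((b - b ^ 2) / (1 - t ^ 2) * (Ω t * (1 - t ^ 2) ^ ((1 - b) / 2))) t := by
  have hp : 0 < 1 - t ^ 2 := by linarith
  have h := (hΩ'.hasDerivAt.mul (hasDerivAt_one_sub_sq_rpow ((1 - b) / 2) ht)).sub
    ((((hasDerivAt_id t).const_mul (1 - b)).mul hΩ.hasDerivAt).mul
      (hasDerivAt_one_sub_sq_rpow ((1 - b) / 2 - 1) ht))
  refine h.congr_deriv ?_
  -- expressing every power of `1 - t²` through `P` makes the identity polynomial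
  set P := (1 - t ^ 2) ^ ((1 - b) / 2 - 1 - 1)
  have h1 : (1 - t ^ 2) ^ ((1 - b) / 2 - 1) = P * (1 - t ^ 2) := by
    rw [← rpow_add_one hp.ne']; ring_nf
  have h2 : (1 - t ^ 2) ^ ((1 - b) / 2) = P * (1 - t ^ 2) ^ 2 := by
    rw [pow_two (1 - t ^ 2), ← mul_assoc, ← h1, ← rpow_add_one hp.ne']; ring_nf
  simp only [id, Pi.mul_apply, h1, h2]
  field_simp
  linear_combination P * hode

lemma hasDerivAt_deriv_mul_one_sub_sq_rpow_of_mem_Ico (hΩ : ContDiff ℝ 2 Ω)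
    (hode : ∀ x ∈ Ioo (0 : ℝ) 1, (1 - x ^ 2) ^ 2 * deriv (deriv Ω) x
      - 2 * (1 - b) * x * (1 - x ^ 2) * deriv Ω x - (1 - b ^ 2) * Ω x = 0)
    (ht : t ∈ Ico (0 : ℝ) 1) :
    HasDerivAt (fun x => deriv Ω x * (1 - x ^ 2) ^ ((1 - b) / 2)
        - (1 - b) * x * Ω x * (1 - x ^ 2) ^ ((1 - b) / 2 - 1))
      ((b - b ^ 2) / (1 - t ^ 2) * (Ω t * (1 - t ^ 2) ^ ((1 - b) / 2))) t := by
  have hΩc : Continuous Ω := hΩ.continuous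
  have hΩ'c : Continuous (deriv Ω) := hΩ.continuous_deriv (by norm_num)
  have hΩ''c : Continuous (deriv (deriv Ω)) := (hΩ.deriv' (n := 1)).continuous_deriv_one
  have hode₀ : EqOn (fun x => (1 - x ^ 2) ^ 2 * deriv (deriv Ω) x
      - 2 * (1 - b) * x * (1 - x ^ 2) * deriv Ω x - (1 - b ^ 2) * Ω x) 0 (Icc 0 1) :=
    EqOn.of_subset_closure hode (by fun_prop : Continuous _).continuousOn continuousOn_const
      Ioo_subset_Icc_self (by rw [closure_Ioo zero_ne_one])
  exact hasDerivAt_deriv_mul_one_sub_sq_rpow (hΩ.differentiable two_ne_zero t)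
    (hΩ.differentiable_deriv_two t) (by nlinarith [ht.1, ht.2])
    (hode₀ (Ico_subset_Icc_self ht))

end Substitution

theorem stmt_5_general (b C : ℝ) (Ω : ℝ → ℝ)
    (hΩ : ContDiff ℝ 2 Ω) (h0 : Ω 0 = 0) (h0' : deriv Ω 0 = C)
    (hode : ∀ x ∈ Ioo (0:ℝ) 1,
      (1 - x^2)^2 * deriv (deriv Ω) x - 2*(1-b)*x*(1 - x^2) * deriv Ω x
        - (1 - b^2) * Ω x = 0) :
    ∀ x ∈ Ioo (0:ℝ) 1,
      Ω x = C * x * (1 - x^2) ^ ((b-1)/2) * twoF1 ((1-b)/2) (b/2) (3/2) (x^2) := by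
  intro x hx
  have hI : ∀ τ ∈ Icc 0 x, τ ∈ Ico (0 : ℝ) 1 := fun τ hτ => ⟨hτ.1, hτ.2.trans_lt hx.2⟩
  have habs : ∀ τ ∈ Icc 0 x, |τ| < 1 :=
    fun τ hτ => abs_lt.2 ⟨by linarith [hτ.1], (hI τ hτ).2⟩
  have key :
      Ω x * (1 - x ^ 2) ^ ((1 - b) / 2) = C * ∑' n, oddHypergeometricCoeff b n * x ^ n :=
    ODE_linear_second_order_unique_of_mem_Icc_right (q := fun τ => (b - b ^ 2) / (1 - τ ^ 2))
      (continuousOn_const.div (by fun_prop) fun τ hτ =>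
        (sub_pos.2 ((sq_lt_one_iff_abs_lt_one τ).2 (habs τ hτ))).ne')
      (fun τ hτ => hasDerivAt_mul_one_sub_sq_rpow (hΩ.differentiable two_ne_zero τ)
        ((sq_lt_one_iff_abs_lt_one τ).2 (habs τ hτ)))
      (fun τ hτ => hasDerivAt_deriv_mul_one_sub_sq_rpow_of_mem_Ico hΩ hode (hI τ hτ))
      (fun τ hτ => (hasDerivAt_tsum_oddHypergeometricCoeff b (habs τ hτ)).const_mul C)
      (fun τ hτ => ((hasDerivAt_tsum_derivCoeff_oddHypergeometricCoeff b (habs τ hτ)).const_mul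
        C).congr_deriv (by ring))
      (by simp [h0]) (by simp [h0']) ⟨hx.1.le, le_rfl⟩
  have hw : (1 - x ^ 2) ^ ((1 - b) / 2) * (1 - x ^ 2) ^ ((b - 1) / 2) = 1 := by
    rw [← rpow_add (by nlinarith [hx.1, hx.2]), show (1 - b) / 2 + (b - 1) / 2 = 0 by ring,
      rpow_zero]
  calc Ω x = Ω x * (1 - x ^ 2) ^ ((1 - b) / 2) * (1 - x ^ 2) ^ ((b - 1) / 2) := by
        rw [mul_assoc, hw, mul_one]
    _ = C * x * (1 - x ^ 2) ^ ((b - 1) / 2) * twoF1 ((1 - b) / 2) (b / 2) (3 / 2) (x ^ 2) := by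
        rw [key, tsum_oddHypergeometricCoeff_mul_pow]
        ring

theorem stmt_5 (b C : ℝ) (hb : 0 < b) (hb1 : b ≠ 1) (Ω : ℝ → ℝ)
    (hΩ : ContDiff ℝ 2 Ω) (h0 : Ω 0 = 0) (h0' : deriv Ω 0 = C)
    (hode : ∀ x ∈ Ioo (0:ℝ) 1,
      (1 - x^2)^2 * deriv (deriv Ω) x - 2*(1-b)*x*(1 - x^2) * deriv Ω x
        - (1 - b^2) * Ω x = 0) :
    ∀ x ∈ Ioo (0:ℝ) 1,
      Ω x = C * x * (1 - x^2) ^ ((b-1)/2) * twoF1 ((1-b)/2) (b/2) (3/2) (x^2) :=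
  stmt_5_general b C Ω hΩ h0 h0' hode
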